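/- Let β > 0 and f ∈ V¹_β(φ) with coefficient sequence c ∈ ℓ¹(ℤ). Then for every fixed ω ∈ ℝ, the function x ↦ |Gf(x,ω)|² belongs to the shift-invariant space V¹_{β/2}(φ), i.e. it equals Σ_{n∈ℤ} A_n φ(x − (β/2)n) with (A_n) ∈ ℓ¹(ℤ) satisfying ‖A‖_{ℓ¹} ≤ φ(ω)‖c‖²_{ℓ¹}. -/

import Mathlib

/-!
Each shifted Gaussian `φ(· - a)` has an explicit Gabor transform, a Gaussian in `x - a` and `ω`
times a character. Since `f = Σ c_k φ(· - βk)` converges absolutely, `Gf = Σ c_k Gφ(· - βk)`, and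
`|Gf|² = Gf · conj Gf` is a Cauchy product over `ℤ`. Completing the square,
`(x - a)² + (x - b)² = 2 (x - (a + b)/2)² + (a - b)²/2`, turns each product
`Gφ(· - βk) · conj Gφ(· - βj)` into a multiple of `φ(x - β(k + j)/2)`; grouping by `n = k + j`
gives the expansion in `V¹_{β/2}(φ)`. The coefficients are dominated by the convolution
`φ(ω) Σ_k |c_k| |c_{n-k}|`, whose `ℓ¹` norm is `φ(ω) ‖c‖₁²`.
-/

open MeasureTheory Complex

/-- The Gabor transform with Gaussian window `φ(t) = exp(-π t²)`. -/
noncomputable def gaborTransform (f : ℝ → ℂ) (x ω : ℝ) : ℂ :=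
  ∫ t : ℝ, f t * (Real.exp (-Real.pi * (t - x)^2) : ℂ) *
    Complex.exp (-2 * Real.pi * Complex.I * t * ω)

/-- The coefficients `A_n = Σ_{j+k=n} c_k conj(c_j) (1/2)e^{-(πβ²/4)(k-j)²}
e^{πiβ(j-k)ω} φ(ω)` of the expansion of `x ↦ |Gf(x,ω)|²` in `V¹_{β/2}(φ)`. -/
noncomputable def specCoeff (β : ℝ) (c : ℤ → ℂ) (ω : ℝ) (n : ℤ) : ℂ :=
  ∑' k : ℤ, c k * starRingEnd ℂ (c (n - k)) *
    ((1/2 : ℝ) * Real.exp (-(Real.pi * β^2 / 4) * (((n - k : ℤ) : ℝ) - k)^2) : ℝ) *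
    Complex.exp (Real.pi * Complex.I * β * ((((n - k : ℤ) : ℝ)) - k) * ω) *
    (Real.exp (-Real.pi * ω^2) : ℝ)

open ComplexConjugate

section Convolution

variable {G R : Type*} [AddGroup G]

def Equiv.antidiagonalSub : G × G ≃ G × G where
  toFun p := (p.2, p.1 - p.2)
  invFun q := (q.2 + q.1, q.1)
  left_inv p := by simp
  right_inv q := by simp

variable [NormedRing R] {f g : G → R}

lemma summable_norm_mul_sub (hf : Summable fun k => ‖f k‖) (hg : Summable fun k => ‖g k‖) :
    Summable fun p : G × G => ‖f p.2 * g (p.1 - p.2)‖ :=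
  (Equiv.antidiagonalSub.summable_iff (f := fun q : G × G => ‖f q.1 * g q.2‖)).2
    (hf.mul_norm hg)

lemma tsum_mul_tsum_eq_tsum_tsum_sub [CompleteSpace R] (hf : Summable fun k => ‖f k‖)
    (hg : Summable fun k => ‖g k‖) :
    (∑' k, f k) * (∑' j, g j) = ∑' n, ∑' k, f k * g (n - k) := by
  have h := summable_norm_mul_sub hf hg
  rw [tsum_mul_tsum_of_summable_norm hf hg,
    ← Equiv.antidiagonalSub.tsum_eq (fun q : G × G => f q.1 * g q.2)]
  exact h.of_norm.tsum_prod' fun n => (h.prod_factor n).of_norm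

lemma summable_norm_tsum_and_le_of_norm_le_mul_sub {E : Type*} [SeminormedAddCommGroup E]
    {F : G → G → E} {u v : G → ℝ} (hu : Summable u) (hv : Summable v) (hu₀ : 0 ≤ u)
    (hv₀ : 0 ≤ v) (hF : ∀ n k, ‖F n k‖ ≤ u k * v (n - k)) :
    Summable (fun n => ‖∑' k, F n k‖) ∧
      ∑' n, ‖∑' k, F n k‖ ≤ (∑' k, u k) * (∑' k, v k) := by
  have hu' : Summable fun k => ‖u k‖ := by simpa [abs_of_nonneg (hu₀ _)] using hu
  have hv' : Summable fun k => ‖v k‖ := by simpa [abs_of_nonneg (hv₀ _)] using hv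
  obtain ⟨hfibre, hconv⟩ := (summable_prod_of_nonneg fun p => mul_nonneg (hu₀ p.2) (hv₀ _)).1
    (summable_norm_mul_sub hu' hv').of_norm
  have hFn : ∀ n, Summable fun k => ‖F n k‖ := fun n =>
    (hfibre n).of_nonneg_of_le (fun _ => norm_nonneg _) (hF n)
  have hle : ∀ n, ‖∑' k, F n k‖ ≤ ∑' k, u k * v (n - k) := fun n =>
    (norm_tsum_le_tsum_norm (hFn n)).trans ((hFn n).tsum_le_tsum (hF n) (hfibre n))
  have hsum : Summable fun n => ‖∑' k, F n k‖ :=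
    hconv.of_nonneg_of_le (fun _ => norm_nonneg _) hle
  refine ⟨hsum, ?_⟩
  rw [tsum_mul_tsum_eq_tsum_tsum_sub hu' hv']
  exact hsum.tsum_le_tsum hle hconv

end Convolution

section Gabor

lemma norm_gaussian_le_one (a t : ℝ) : ‖(Real.exp (-Real.pi * (t - a)^2) : ℂ)‖ ≤ 1 := by
  rw [norm_real, Real.norm_of_nonneg (Real.exp_pos _).le, Real.exp_le_one_iff]
  nlinarith [Real.pi_pos, sq_nonneg (t - a)]

lemma norm_gaborWindow (x ω t : ℝ) :
    ‖(Real.exp (-Real.pi * (t - x)^2) : ℂ) * cexp (-2 * Real.pi * I * t * ω)‖ =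
      Real.exp (-Real.pi * (t - x)^2) := by
  rw [norm_mul, norm_real, norm_exp]
  simp

lemma integrable_gaborWindow (x ω : ℝ) :
    Integrable fun t : ℝ => (Real.exp (-Real.pi * (t - x)^2) : ℂ) *
      cexp (-2 * Real.pi * I * t * ω) :=
  ((integrable_exp_neg_mul_sq Real.pi_pos).comp_sub_right x).mono' (by fun_prop)
    (ae_of_all _ fun t => (norm_gaborWindow x ω t).le)

lemma norm_gaborTransform_le {g : ℝ → ℂ} {M : ℝ} (hg : ∀ t, ‖g t‖ ≤ M) (x ω : ℝ) :
    ‖gaborTransform g x ω‖ ≤ M := by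
  have hφ : ∫ t, Real.exp (-Real.pi * (t - x)^2) = 1 := by
    rw [integral_sub_right_eq_self (fun t => Real.exp (-Real.pi * t^2)), integral_gaussian,
      div_self Real.pi_ne_zero, Real.sqrt_one]
  calc ‖gaborTransform g x ω‖ ≤ ∫ t, M * Real.exp (-Real.pi * (t - x)^2) := by
        refine norm_integral_le_of_norm_le
          (((integrable_exp_neg_mul_sq Real.pi_pos).comp_sub_right x).const_mul M)
          (ae_of_all _ fun t => ?_)
        rw [mul_assoc, norm_mul, norm_gaborWindow]
        gcongr
        exact hg t
    _ = M := by rw [integral_const_mul, hφ, mul_one]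

lemma gaborTransform_tsum {ι : Type*} [Countable ι] {c : ι → ℂ} (hc : Summable fun i => ‖c i‖)
    {g : ι → ℝ → ℂ} {M : ℝ} (hg_meas : ∀ i, AEStronglyMeasurable (g i))
    (hg : ∀ i t, ‖g i t‖ ≤ M) (x ω : ℝ) :
    gaborTransform (fun t => ∑' i, c i * g i t) x ω = ∑' i, c i * gaborTransform (g i) x ω := by
  set w : ℝ → ℂ := fun t =>
    (Real.exp (-Real.pi * (t - x)^2) : ℂ) * cexp (-2 * Real.pi * I * t * ω) with hw_def
  have hw : Integrable w := integrable_gaborWindow x ω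
  have hgw : ∀ i, Integrable fun t => g i t * w t := fun i =>
    hw.bdd_mul (hg_meas i) (ae_of_all _ (hg i))
  have hnorm_le : ∀ i, ∫ t, ‖c i * (g i t * w t)‖ ≤ ‖c i‖ * (M * ∫ t, ‖w t‖) := by
    intro i
    rw [← integral_const_mul, ← integral_const_mul]
    refine integral_mono ((hgw i).const_mul (c i)).norm ((hw.norm.const_mul M).const_mul _)
      fun t => ?_
    rw [norm_mul, norm_mul]
    gcongr
    exact hg i t
  have hsum : Summable fun i => ∫ t, ‖c i * (g i t * w t)‖ :=
    (hc.mul_right _).of_nonneg_of_le (fun i => integral_nonneg fun t => norm_nonneg _) hnorm_le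
  calc gaborTransform (fun t => ∑' i, c i * g i t) x ω
      = ∫ t, ∑' i, c i * (g i t * w t) := by
        simp only [gaborTransform, hw_def, mul_assoc, ← tsum_mul_right]
    _ = ∑' i, ∫ t, c i * (g i t * w t) :=
        (integral_tsum_of_summable_integral_norm (fun i => (hgw i).const_mul (c i)) hsum).symm
    _ = ∑' i, c i * gaborTransform (g i) x ω := by
        simp only [gaborTransform, hw_def, integral_const_mul, mul_assoc]

lemma gaborTransform_gaussian (a x ω : ℝ) :
    gaborTransform (fun t => (Real.exp (-Real.pi * (t - a)^2) : ℂ)) x ω =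
      (Real.sqrt 2 : ℂ)⁻¹ *
        cexp (-(Real.pi / 2) * ((x - a)^2 + ω^2) - Real.pi * I * (a + x) * ω) := by
  have hb : (-(2 * Real.pi : ℂ)).re < 0 := by simpa using Real.pi_pos
  have hquad : ∀ t : ℝ, (Real.exp (-Real.pi * (t - a)^2) : ℂ) *
      (Real.exp (-Real.pi * (t - x)^2) : ℂ) * cexp (-2 * Real.pi * I * t * ω) =
      cexp (-(2 * Real.pi) * t^2 + (2 * Real.pi * (a + x) - 2 * Real.pi * I * ω) * t +
        -Real.pi * (a^2 + x^2)) := by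
    intro t
    push_cast
    rw [← exp_add, ← exp_add]
    ring_nf
  have hhalf : (1 / 2 : ℂ) ^ (1 / 2 : ℂ) = (Real.sqrt 2 : ℂ)⁻¹ := by
    rw [show (1 / 2 : ℂ) = ((1 / 2 : ℝ) : ℂ) by norm_num, ← ofReal_cpow (by norm_num),
      ← Real.sqrt_eq_rpow, one_div, Real.sqrt_inv, ofReal_inv]
  simp only [gaborTransform, hquad, integral_cexp_quadratic hb]
  rw [neg_neg, show (Real.pi : ℂ) / (2 * Real.pi) = 1 / 2 by field_simp, hhalf]
  congr 2
  field_simp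
  ring_nf
  rw [I_sq]
  ring

lemma gaborTransform_gaussian_mul_conj (a b x ω : ℝ) :
    gaborTransform (fun t => (Real.exp (-Real.pi * (t - a)^2) : ℂ)) x ω *
      conj (gaborTransform (fun t => (Real.exp (-Real.pi * (t - b)^2) : ℂ)) x ω) =
      ((1 / 2 * Real.exp (-(Real.pi / 4) * (b - a)^2) : ℝ) : ℂ) *
        cexp (Real.pi * I * (b - a) * ω) * (Real.exp (-Real.pi * ω^2) : ℂ) *
        (Real.exp (-Real.pi * (x - (a + b) / 2)^2) : ℂ) := by
  have hsqrt : (Real.sqrt 2 : ℂ)⁻¹ * (Real.sqrt 2 : ℂ)⁻¹ = 1 / 2 := by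
    rw [← mul_inv, ← ofReal_mul, Real.mul_self_sqrt zero_le_two]; norm_num
  rw [gaborTransform_gaussian, gaborTransform_gaussian, map_mul, ← exp_conj, map_inv₀,
    conj_ofReal, mul_mul_mul_comm, hsqrt, ← exp_add]
  push_cast
  simp only [mul_assoc, ← exp_add, map_sub, map_mul, map_add, map_neg, map_pow, map_div₀,
    conj_ofReal, conj_I, map_ofNat]
  congr 2
  ring

end Gabor

section SpectrogramCoefficients

variable (β : ℝ) (c : ℤ → ℂ) (ω : ℝ)

noncomputable def specCoeffTerm (n k : ℤ) : ℂ :=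
  c k * starRingEnd ℂ (c (n - k)) *
    ((1/2 : ℝ) * Real.exp (-(Real.pi * β^2 / 4) * (((n - k : ℤ) : ℝ) - k)^2) : ℝ) *
    Complex.exp (Real.pi * Complex.I * β * ((((n - k : ℤ) : ℝ)) - k) * ω) *
    (Real.exp (-Real.pi * ω^2) : ℝ)

lemma specCoeff_eq_tsum (n : ℤ) : specCoeff β c ω n = ∑' k, specCoeffTerm β c ω n k := rfl

lemma norm_specCoeffTerm_le (n k : ℤ) :
    ‖specCoeffTerm β c ω n k‖ ≤ ‖c k‖ * (Real.exp (-Real.pi * ω^2) * ‖c (n - k)‖) := by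
  have hchar : ‖cexp (Real.pi * I * β * ((((n - k : ℤ) : ℝ)) - k) * ω)‖ = 1 := by
    rw [norm_exp]; simp
  have hgauss : (1/2 : ℝ) * Real.exp (-(Real.pi * β^2 / 4) * (((n - k : ℤ) : ℝ) - k)^2) ≤ 1 := by
    have : Real.exp (-(Real.pi * β^2 / 4) * (((n - k : ℤ) : ℝ) - k)^2) ≤ 1 :=
      Real.exp_le_one_iff.2 (mul_nonpos_of_nonpos_of_nonneg
        (neg_nonpos.2 (by positivity)) (sq_nonneg _))
    linarith
  rw [specCoeffTerm, norm_mul, norm_mul, norm_mul, norm_mul, norm_conj, hchar, norm_real,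
    norm_real, Real.norm_of_nonneg (by positivity), Real.norm_of_nonneg (by positivity)]
  calc _ ≤ ‖c k‖ * ‖c (n - k)‖ * 1 * 1 * Real.exp (-Real.pi * ω^2) := by gcongr
    _ = _ := by ring

lemma mul_conj_gaborTransform_gaussian (x : ℝ) (n k : ℤ) :
    c k * gaborTransform (fun t => (Real.exp (-Real.pi * (t - β * k)^2) : ℂ)) x ω *
      conj (c (n - k) *
        gaborTransform (fun t => (Real.exp (-Real.pi * (t - β * (n - k : ℤ))^2) : ℂ)) x ω) =
      specCoeffTerm β c ω n k * (Real.exp (-Real.pi * (x - β / 2 * n)^2) : ℝ) := by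
  rw [map_mul, mul_mul_mul_comm, gaborTransform_gaussian_mul_conj, specCoeffTerm]
  push_cast
  ring_nf

end SpectrogramCoefficients

theorem spectrogram_mem_shift_invariant_general (β : ℝ) (c : ℤ → ℂ)
    (hc : Summable (fun k : ℤ => ‖c k‖)) (f : ℝ → ℂ)
    (hf : ∀ t : ℝ, f t = ∑' k : ℤ, c k * (Real.exp (-Real.pi * (t - β*k)^2) : ℂ))
    (ω : ℝ) :
    Summable (fun n : ℤ => ‖specCoeff β c ω n‖) ∧
      (∑' n : ℤ, ‖specCoeff β c ω n‖) ≤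
        Real.exp (-Real.pi * ω^2) * (∑' k : ℤ, ‖c k‖)^2 ∧
      ∀ x : ℝ, ((‖gaborTransform f x ω‖^2 : ℝ) : ℂ) =
        ∑' n : ℤ, specCoeff β c ω n *
          (Real.exp (-Real.pi * (x - β/2 * n)^2) : ℝ) := by
  obtain ⟨hsum, hle⟩ := summable_norm_tsum_and_le_of_norm_le_mul_sub hc
    (hc.mul_left (Real.exp (-Real.pi * ω^2))) (fun _ => norm_nonneg _)
    (fun _ => by positivity) (norm_specCoeffTerm_le β c ω)
  refine ⟨hsum, hle.trans_eq (by rw [tsum_mul_left]; ring), fun x => ?_⟩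
  set a : ℤ → ℂ := fun k =>
    c k * gaborTransform (fun t => (Real.exp (-Real.pi * (t - β * k)^2) : ℂ)) x ω
  have ha : Summable fun k => ‖a k‖ :=
    hc.of_nonneg_of_le (fun _ => norm_nonneg _) fun k => by
      rw [norm_mul]
      exact mul_le_of_le_one_right (norm_nonneg _)
        (norm_gaborTransform_le (norm_gaussian_le_one _) x ω)
  have hGf : gaborTransform f x ω = ∑' k, a k :=
    (congrArg (gaborTransform · x ω) (funext hf)).trans
      (gaborTransform_tsum hc (fun k => by fun_prop) (fun k => norm_gaussian_le_one _) x ω)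
  rw [ofReal_pow, ← mul_conj', hGf, conj_tsum,
    tsum_mul_tsum_eq_tsum_tsum_sub ha (by simpa only [norm_conj] using ha)]
  refine tsum_congr fun n => ?_
  rw [specCoeff_eq_tsum, ← tsum_mul_right]
  exact tsum_congr fun k => mul_conj_gaborTransform_gaussian β c ω x n k

/-- For `f ∈ V¹_β(φ)` and fixed `ω`, the map `x ↦ |Gf(x,ω)|²` belongs to
`V¹_{β/2}(φ)` with coefficients `(A_n) ∈ ℓ¹` satisfying `‖A‖₁ ≤ φ(ω)‖c‖₁²`. -/
theorem spectrogram_mem_shift_invariant (β : ℝ) (hβ : 0 < β) (c : ℤ → ℂ)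
    (hc : Summable (fun k : ℤ => ‖c k‖)) (f : ℝ → ℂ)
    (hf : ∀ t : ℝ, f t = ∑' k : ℤ, c k * (Real.exp (-Real.pi * (t - β*k)^2) : ℂ))
    (ω : ℝ) :
    Summable (fun n : ℤ => ‖specCoeff β c ω n‖) ∧
      (∑' n : ℤ, ‖specCoeff β c ω n‖) ≤
        Real.exp (-Real.pi * ω^2) * (∑' k : ℤ, ‖c k‖)^2 ∧
      ∀ x : ℝ, ((‖gaborTransform f x ω‖^2 : ℝ) : ℂ) =
        ∑' n : ℤ, specCoeff β c ω n *
          (Real.exp (-Real.pi * (x - β/2 * n)^2) : ℝ) :=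
  spectrogram_mem_shift_invariant_general β c hc f hf ω
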